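/- Fix s ∈ ℝ. For a 3×3 real matrix Q that is symmetric and has trace zero, the following are equivalent: (i) Q = s(n⊗n − (1/3)Id) for some unit vector n ∈ ℝ³; (ii) the characteristic polynomial of Q equals (X + s/3)²·(X − 2s/3), i.e. the eigenvalues of Q (with multiplicity) are −s/3, −s/3 and 2s/3. -/
import Mathlib


open Polynomial

open Matrix in
private lemma keyP (s : ℝ) (hs : s ≠ 0) (P : Matrix (Fin 3) (Fin 3) ℝ) (hPs : Pᵀ = P)
    (hP2 : P * P = s • P) (htrP : P.trace = s) :
    ∃ n : Fin 3 → ℝ, (∑ i, (n i) ^ 2) = 1 ∧ P = s • Matrix.vecMulVec n n := by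
  set R : Matrix (Fin 3) (Fin 3) ℝ := s⁻¹ • P with hR
  have hPR : P = s • R := by
    rw [hR, smul_smul, mul_inv_cancel₀ hs, one_smul]
  have hR2 : R * R = R := by
    rw [hR, smul_mul_assoc, mul_smul_comm, hP2, smul_smul, smul_smul]
    congr 1
    field_simp
  have hRs : Rᵀ = R := by rw [hR, transpose_smul, hPs]
  have hRe : ∀ a b, R a b = R b a := by
    intro a b
    have h := congrFun (congrFun hRs b) a
    rw [Matrix.transpose_apply] at h
    exact h
  have htrR : R 0 0 + R 1 1 + R 2 2 = 1 := by
    have : R.trace = 1 := by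
      rw [hR, trace_smul, htrP, smul_eq_mul, inv_mul_cancel₀ hs]
    simpa [Matrix.trace, Matrix.diag, Fin.sum_univ_three] using this
  have hdiag : ∀ j, R j j = ∑ k, (R k j) ^ 2 := by
    intro j
    conv_lhs => rw [← hR2]
    rw [Matrix.mul_apply]
    congr 1; ext k
    rw [hRe j k, sq]
  have hdnn : ∀ j, 0 ≤ R j j := by
    intro j; rw [hdiag j]; positivity
  have hexj : ∃ j, 0 < R j j := by
    by_contra h
    push_neg at h
    have h0 := h 0; have h1 := h 1; have h2 := h 2
    linarith
  obtain ⟨j, hj⟩ := hexj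
  set c : ℝ := Real.sqrt (R j j) with hc
  have hcpos : 0 < c := Real.sqrt_pos.mpr hj
  have hc2 : c ^ 2 = R j j := Real.sq_sqrt hj.le
  set n : Fin 3 → ℝ := fun i => R i j / c with hn
  have hdj : R j j = R 0 j ^ 2 + R 1 j ^ 2 + R 2 j ^ 2 := by
    simpa [Fin.sum_univ_three] using hdiag j
  have hn1 : (∑ i, (n i) ^ 2) = 1 := by
    rw [Fin.sum_univ_three, hn]
    field_simp
    rw [hc2]
    linarith
  have hfix : ∀ i, R i 0 * n 0 + R i 1 * n 1 + R i 2 * n 2 = n i := by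
    intro i
    have h := congrFun (congrFun hR2 i) j
    rw [Matrix.mul_apply, Fin.sum_univ_three] at h
    simp only [hn]
    field_simp
    linarith
  set N : Matrix (Fin 3) (Fin 3) ℝ := Matrix.vecMulVec n n with hN
  have hNa : ∀ i k, N i k = n i * n k := fun i k => rfl
  have hn1' : n 0 ^ 2 + n 1 ^ 2 + n 2 ^ 2 = 1 := by
    simpa [Fin.sum_univ_three] using hn1
  have hNN : N * N = N := by
    ext i k
    rw [Matrix.mul_apply, Fin.sum_univ_three]
    simp only [hNa]
    linear_combination (n i * n k) * hn1'
  have hRN : R * N = N := by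
    ext i k
    rw [Matrix.mul_apply, Fin.sum_univ_three]
    simp only [hNa]
    linear_combination n k * hfix i
  have hNR : N * R = N := by
    ext i k
    rw [Matrix.mul_apply, Fin.sum_univ_three]
    simp only [hNa]
    rw [hRe 0 k, hRe 1 k, hRe 2 k]
    linear_combination n i * hfix k
  set S : Matrix (Fin 3) (Fin 3) ℝ := R - N with hS
  have hSS : S * S = S := by
    rw [hS, sub_mul, mul_sub, mul_sub, hR2, hRN, hNR, hNN]
    abel
  have hSsym : Sᵀ = S := by
    rw [hS, transpose_sub, hRs]
    congr 1
    ext a b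
    simp [hN, Matrix.vecMulVec_apply, mul_comm]
  have htrS : S.trace = 0 := by
    have htrN : N.trace = 1 := by
      simpa [Matrix.trace, Matrix.diag, Fin.sum_univ_three, hNa, sq] using hn1'
    have htrR' : R.trace = 1 := by
      simpa [Matrix.trace, Matrix.diag, Fin.sum_univ_three] using htrR
    rw [hS, trace_sub, htrN, htrR', sub_self]
  have hsum0 : ∑ i, ∑ k, (S k i) ^ 2 = 0 := by
    have h1 : (Sᵀ * S).trace = ∑ i, ∑ k, (S k i) ^ 2 := by
      simp [Matrix.trace, Matrix.diag, Matrix.mul_apply, Matrix.transpose_apply, sq]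
    rw [hSsym, hSS, htrS] at h1
    exact h1.symm
  have hS0 : S = 0 := by
    ext i k
    have h1 : ∀ a ∈ Finset.univ, (0:ℝ) ≤ ∑ b, (S b a) ^ 2 := by
      intro a _; positivity
    have h2 := (Finset.sum_eq_zero_iff_of_nonneg h1).mp hsum0 k (Finset.mem_univ k)
    have h3 : ∀ b ∈ Finset.univ, (0:ℝ) ≤ (S b k) ^ 2 := by
      intro b _; positivity
    have h4 := (Finset.sum_eq_zero_iff_of_nonneg h3).mp h2 i (Finset.mem_univ i)
    simpa using pow_eq_zero_iff (n := 2) (by norm_num) |>.mp h4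
  have hRNeq : R = N := by
    exact sub_eq_zero.mp (hS ▸ hS0)
  exact ⟨n, hn1, by rw [hPR, hRNeq]⟩

/-- For fixed `s : ℝ` and a symmetric traceless 3×3 real matrix `Q`,
`Q = s(n⊗n − (1/3)Id)` for some unit vector `n` iff the characteristic polynomial of `Q`
is `(X + s/3)² (X − 2s/3)`. -/
theorem stmt0 (s : ℝ) (Q : Matrix (Fin 3) (Fin 3) ℝ)
    (hsym : Q.IsSymm) (htr : Q.trace = 0) :
    (∃ n : Fin 3 → ℝ, (∑ i, (n i) ^ 2) = 1 ∧
        Q = s • (Matrix.vecMulVec n n - (1 / 3 : ℝ) • (1 : Matrix (Fin 3) (Fin 3) ℝ))) ↔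
      Q.charpoly = (X + C (s / 3)) ^ 2 * (X - C (2 * s / 3)) := by
  open Matrix in
  constructor
  · rintro ⟨n, hn, rfl⟩
    rw [Fin.sum_univ_three] at hn
    rw [Matrix.charpoly, Matrix.det_fin_three]
    apply Polynomial.funext
    intro x
    simp [charmatrix_apply, Matrix.one_apply, Matrix.vecMulVec_apply, Matrix.diagonal]
    linear_combination (-(2/3)*s^2*x - s*x^2 - s^3/9) * hn
  · intro hcp
    -- Cayley–Hamilton
    have h2 : (Q + (s/3) • 1) ^ 2 * (Q - (2*s/3) • 1) = 0 := by
      have h := Q.aeval_self_charpoly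
      rw [hcp] at h
      simpa [_root_.map_mul, _root_.map_pow, _root_.map_add, _root_.map_sub,
        aeval_X, aeval_C, Algebra.algebraMap_eq_smul_one] using h
    set A := Q + (s/3) • (1 : Matrix (Fin 3) (Fin 3) ℝ) with hA
    set B := Q - (2*s/3) • (1 : Matrix (Fin 3) (Fin 3) ℝ) with hB
    have hAs : Aᵀ = A := by
      rw [hA, transpose_add, transpose_smul, transpose_one, hsym.eq]
    have hBs : Bᵀ = B := by
      rw [hB, transpose_sub, transpose_smul, transpose_one, hsym.eq]
    have hcomm : A * B = B * A := by
      rw [hA, hB]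
      simp only [add_mul, mul_add, sub_mul, mul_sub, smul_mul_assoc, mul_smul_comm,
        mul_one, one_mul]
      module
    have hT : (A * B)ᴴ = (A * B)ᵀ := by ext i j; simp [conjTranspose_apply]
    have key : (A * B)ᴴ * (A * B) = 0 := by
      rw [hT, transpose_mul, hAs, hBs]
      calc B * A * (A * B) = B * (A * A * B) := by noncomm_ring
        _ = B * (A ^ 2 * B) := by rw [sq]
        _ = 0 := by rw [h2, mul_zero]
    have hAB : A * B = 0 := conjTranspose_mul_self_eq_zero.mp key
    rcases eq_or_ne s 0 with hs | hs
    · -- s = 0 : Q = 0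
      subst hs
      have hQQ : Q * Q = 0 := by
        have : A = Q := by rw [hA]; norm_num
        have hB' : B = Q := by rw [hB]; norm_num
        rw [this, hB'] at hAB
        exact hAB
      have hT' : Qᴴ = Qᵀ := by ext i j; simp [conjTranspose_apply]
      have hQ0 : Q = 0 := by
        apply conjTranspose_mul_self_eq_zero.mp
        rw [hT', hsym.eq, hQQ]
      refine ⟨![1, 0, 0], by simp [Fin.sum_univ_three], ?_⟩
      rw [hQ0, zero_smul]
    · -- s ≠ 0
      have hBA : B = A - s • 1 := by
        rw [hA, hB]
        module
      have hP2 : A * A = s • A := by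
        have : A * (A - s • 1) = A * A - s • A := by
          rw [mul_sub, mul_smul_comm, mul_one]
        rw [hBA, this] at hAB
        have := sub_eq_zero.mp hAB
        exact this
      have htrA : A.trace = s := by
        rw [hA, trace_add, trace_smul, htr, trace_one]
        simp
      obtain ⟨n, hn1, hPn⟩ := keyP s hs A hAs hP2 htrA
      refine ⟨n, hn1, ?_⟩
      have hQA : Q = A - (s/3) • 1 := by rw [hA]; module
      rw [hQA, hPn, smul_sub, smul_smul]
      module
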